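/- arXiv:2003.08288 — 2 statements merged into one kernel-verified Lean document; each statement's English description precedes it below -/
import Mathlib

section
/- Let T be a finite index set, let K ≥ 1 be a natural number, and for each t ∈ T let k t be a natural number with 1 ≤ k t ≤ K and let q t : Fin (k t) → ℝ satisfy q t f > 0 for all f. Define p t = ∑ f, q t f for each t, and assume ∑ t, p t = 1. Then ∑ t, ∑ f, (q t f) * logb 2 (1 / q t f) ≤ (∑ t, p t * logb 2 (1 / p t)) + logb 2 K. -/
open Real Finset

/-!
Jensen's inequality for the concave function `x ↦ -x log x` at uniform weights shows that
splitting a mass `p` into `n` pieces raises its entropy contribution by at most `p log n`.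
Each cell has at most `K` pieces, so summing over the cells and using `∑ p_t = 1` bounds the
total increase by `log K`.
-/

lemma Real.log_natCast_le_log_natCast {m n : ℕ} (h : m ≤ n) : log m ≤ log n := by
  rcases m.eq_zero_or_pos with rfl | hm
  · simpa using log_natCast_nonneg n
  · exact log_le_log (by exact_mod_cast hm) (by exact_mod_cast h)

lemma Real.mul_logb_one_div (b x : ℝ) : x * logb b (1 / x) = negMulLog x / log b := by
  rw [logb, one_div, log_inv, negMulLog]
  ring

lemma Real.sum_negMulLog_le {ι : Type*} (s : Finset ι) (q : ι → ℝ) (hq : ∀ i ∈ s, 0 ≤ q i) :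
    ∑ i ∈ s, negMulLog (q i) ≤
      negMulLog (∑ i ∈ s, q i) + (∑ i ∈ s, q i) * log #s := by
  rcases s.eq_empty_or_nonempty with rfl | hs
  · simp
  set n : ℝ := (#s : ℝ)
  have hn : 0 < n := by simpa [n] using hs.card_pos
  have jensen := concaveOn_negMulLog.le_map_sum (t := s) (w := fun _ => n⁻¹) (p := q)
    (fun _ _ => inv_nonneg.2 hn.le) (by simp [n, hn.ne']) hq
  simp only [smul_eq_mul, ← mul_sum] at jensen
  have hsplit : negMulLog (n⁻¹ * ∑ i ∈ s, q i) =
      n⁻¹ * (negMulLog (∑ i ∈ s, q i) + (∑ i ∈ s, q i) * log n) := by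
    rw [negMulLog_mul, negMulLog, log_inv]
    ring
  rw [hsplit] at jensen
  exact le_of_mul_le_mul_left jensen (inv_pos.2 hn)

theorem entropy_fragmentation_general {T : Type*} [Fintype T] (K : ℕ)
    (k : T → ℕ) (hkK : ∀ t, k t ≤ K)
    (q : ∀ t, Fin (k t) → ℝ) (hq : ∀ t f, 0 < q t f)
    (hsum : ∑ t, ∑ f, q t f = 1) :
    ∑ t, ∑ f, q t f * Real.logb 2 (1 / q t f) ≤
      (∑ t, (∑ f, q t f) * Real.logb 2 (1 / (∑ f, q t f))) + Real.logb 2 K := by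
  set p : T → ℝ := fun t => ∑ f, q t f
  have hp : ∀ t, 0 ≤ p t := fun t => sum_nonneg fun f _ => (hq t f).le
  have cell : ∀ t, ∑ f, negMulLog (q t f) ≤ negMulLog (p t) + p t * log K := fun t =>
    calc ∑ f, negMulLog (q t f) ≤ negMulLog (p t) + p t * log (k t) := by
          simpa using sum_negMulLog_le univ (q t) fun f _ => (hq t f).le
      _ ≤ negMulLog (p t) + p t * log K := by
          gcongr _ + ?_
          exact mul_le_mul_of_nonneg_left (log_natCast_le_log_natCast (hkK t)) (hp t)
  have total : ∑ t, ∑ f, negMulLog (q t f) ≤ ∑ t, negMulLog (p t) + log K := by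
    calc ∑ t, ∑ f, negMulLog (q t f) ≤ ∑ t, (negMulLog (p t) + p t * log K) :=
          sum_le_sum fun t _ => cell t
      _ = ∑ t, negMulLog (p t) + log K := by
          rw [sum_add_distrib, ← sum_mul]
          simp [p, hsum]
  simp only [mul_logb_one_div]
  simp only [← sum_div, logb, ← add_div]
  exact div_le_div_of_nonneg_right total (log_nonneg one_le_two)

theorem entropy_fragmentation {T : Type*} [Fintype T] (K : ℕ) (hK : 1 ≤ K)
    (k : T → ℕ) (hk1 : ∀ t, 1 ≤ k t) (hkK : ∀ t, k t ≤ K)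
    (q : ∀ t, Fin (k t) → ℝ) (hq : ∀ t f, 0 < q t f)
    (hsum : ∑ t, ∑ f, q t f = 1) :
    ∑ t, ∑ f, q t f * Real.logb 2 (1 / q t f) ≤
      (∑ t, (∑ f, q t f) * Real.logb 2 (1 / (∑ f, q t f))) + Real.logb 2 K :=
  entropy_fragmentation_general K k hkK q hq hsum
end

section
/- Let A ≤ a < b ≤ B be real numbers, let D and c be natural numbers, and let P₀, P₁, …, P_D be finite sets of pairs (s,t) ∈ ℝ × ℝ with s < t such that for each d the half-open intervals Set.Ico s t for (s,t) ∈ P_d are pairwise disjoint with union Set.Ico A B, every interval of P_d (for d ≥ 1) is contained in some interval of P_{d-1}, and every interval of P_{d-1} contains at most c intervals of P_d. Then the total number, over all d with 1 ≤ d ≤ D, of intervals J of P_d such that J ⊆ Set.Ico a b and the interval of P_{d-1} containing J is not contained in Set.Ico a b, is at most 2*c*D. -/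
theorem free_gap_fragmentation (A a b B : ℝ) (hAa : A ≤ a) (hab : a < b) (hbB : b ≤ B)
    (D c : ℕ) (P : ℕ → Finset (ℝ × ℝ))
    (hlt : ∀ d ≤ D, ∀ p ∈ P d, p.1 < p.2)
    (hdisj : ∀ d ≤ D, ∀ p ∈ P d, ∀ q ∈ P d, p ≠ q →
      Disjoint (Set.Ico p.1 p.2) (Set.Ico q.1 q.2))
    (hunion : ∀ d ≤ D, ⋃ p ∈ P d, Set.Ico p.1 p.2 = Set.Ico A B)
    (hrefine : ∀ d, 1 ≤ d → d ≤ D → ∀ p ∈ P d, ∃ q ∈ P (d - 1),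
      Set.Ico p.1 p.2 ⊆ Set.Ico q.1 q.2)
    (hfan : ∀ d, 1 ≤ d → d ≤ D → ∀ q ∈ P (d - 1),
      {p ∈ (P d : Set (ℝ × ℝ)) | Set.Ico p.1 p.2 ⊆ Set.Ico q.1 q.2}.ncard ≤ c) :
    ∑ d ∈ Finset.Icc 1 D,
      {J ∈ (P d : Set (ℝ × ℝ)) |
          Set.Ico J.1 J.2 ⊆ Set.Ico a b ∧
          ∃ q ∈ P (d - 1), Set.Ico J.1 J.2 ⊆ Set.Ico q.1 q.2 ∧
            ¬ Set.Ico q.1 q.2 ⊆ Set.Ico a b}.ncard ≤ 2 * c * D := by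
  have key : ∀ d ∈ Finset.Icc 1 D,
      {J ∈ (P d : Set (ℝ × ℝ)) |
          Set.Ico J.1 J.2 ⊆ Set.Ico a b ∧
          ∃ q ∈ P (d - 1), Set.Ico J.1 J.2 ⊆ Set.Ico q.1 q.2 ∧
            ¬ Set.Ico q.1 q.2 ⊆ Set.Ico a b}.ncard ≤ 2 * c := by
    intro d hd
    rw [Finset.mem_Icc] at hd
    obtain ⟨hd1, hdD⟩ := hd
    have hd1D : d - 1 ≤ D := le_trans (Nat.sub_le d 1) hdD
    -- uniqueness of interval containing a point at level d-1
    have huniq : ∀ x : ℝ, ∀ p ∈ P (d-1), ∀ q ∈ P (d-1),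
        x ∈ Set.Ico p.1 p.2 → x ∈ Set.Ico q.1 q.2 → p = q := by
      intro x p hp q hq hxp hxq
      by_contra hne
      exact (hdisj (d-1) hd1D p hp q hq hne).ne_of_mem hxp hxq rfl
    -- interval containing a
    have haAB : a ∈ Set.Ico A B := ⟨hAa, lt_of_lt_of_le hab hbB⟩
    have ha : a ∈ ⋃ p ∈ P (d-1), Set.Ico p.1 p.2 := (hunion (d-1) hd1D) ▸ haAB
    simp only [Set.mem_iUnion] at ha
    obtain ⟨qa, hqa, hqaa⟩ := ha
    -- interval containing b, if b < B; otherwise dummy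
    have hqb : ∃ qb : ℝ × ℝ, qb ∈ P (d-1) ∧ (b < B → b ∈ Set.Ico qb.1 qb.2) := by
      by_cases hbB' : b < B
      · have hb : b ∈ ⋃ p ∈ P (d-1), Set.Ico p.1 p.2 :=
          (hunion (d-1) hd1D) ▸ (⟨le_trans hAa hab.le, hbB'⟩ : b ∈ Set.Ico A B)
        simp only [Set.mem_iUnion] at hb
        obtain ⟨qb, hqb, hqbb⟩ := hb
        exact ⟨qb, hqb, fun _ => hqbb⟩
      · exact ⟨qa, hqa, fun h => absurd h hbB'⟩
    obtain ⟨qb, hqbmem, hqbb⟩ := hqb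
    set Ca := {p ∈ (P d : Set (ℝ × ℝ)) | Set.Ico p.1 p.2 ⊆ Set.Ico qa.1 qa.2}
    set Cb := {p ∈ (P d : Set (ℝ × ℝ)) | Set.Ico p.1 p.2 ⊆ Set.Ico qb.1 qb.2}
    have hCaf : Ca.Finite := (P d).finite_toSet.subset (fun p hp => hp.1)
    have hCbf : Cb.Finite := (P d).finite_toSet.subset (fun p hp => hp.1)
    have hsub : {J ∈ (P d : Set (ℝ × ℝ)) |
          Set.Ico J.1 J.2 ⊆ Set.Ico a b ∧
          ∃ q ∈ P (d - 1), Set.Ico J.1 J.2 ⊆ Set.Ico q.1 q.2 ∧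
            ¬ Set.Ico q.1 q.2 ⊆ Set.Ico a b} ⊆ Ca ∪ Cb := by
      rintro J ⟨hJ, hJab, q, hq, hJq, hqnab⟩
      have hJlt : J.1 < J.2 := hlt d hdD J hJ
      have hx : J.1 ∈ Set.Ico J.1 J.2 := ⟨le_refl _, hJlt⟩
      have hxab : J.1 ∈ Set.Ico a b := hJab hx
      have hxq : J.1 ∈ Set.Ico q.1 q.2 := hJq hx
      -- q not contained in [a,b): q.1 < a or b < q.2
      have hcase : q.1 < a ∨ b < q.2 := by
        by_contra hcon
        push_neg at hcon
        exact hqnab (Set.Ico_subset_Ico hcon.1 hcon.2)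
      rcases hcase with hc | hc
      · -- a ∈ Ico q, so q = qa
        have haq : a ∈ Set.Ico q.1 q.2 := ⟨hc.le, lt_of_le_of_lt hxab.1 hxq.2⟩
        have : q = qa := huniq a q hq qa hqa haq hqaa
        exact Or.inl ⟨hJ, this ▸ hJq⟩
      · -- b ∈ Ico q, so q = qb
        have hqAB : Set.Ico q.1 q.2 ⊆ Set.Ico A B := by
          rw [← hunion (d-1) hd1D]
          exact fun x hx => Set.mem_biUnion hq hx
        have hq2B : q.2 ≤ B := by
          by_contra hcon
          push_neg at hcon
          have : max q.1 B ∈ Set.Ico q.1 q.2 :=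
            ⟨le_max_left _ _, max_lt (lt_of_le_of_lt hxq.1 hxq.2) hcon⟩
          exact absurd (hqAB this).2 (not_lt.mpr (le_max_right _ _))
        have hbB' : b < B := lt_of_lt_of_le hc hq2B
        have hbq : b ∈ Set.Ico q.1 q.2 := ⟨le_trans hxq.1 hxab.2.le, hc⟩
        have : q = qb := huniq b q hq qb hqbmem hbq (hqbb hbB')
        exact Or.inr ⟨hJ, this ▸ hJq⟩
    calc _ ≤ (Ca ∪ Cb).ncard := Set.ncard_le_ncard hsub (hCaf.union hCbf)
      _ ≤ Ca.ncard + Cb.ncard := Set.ncard_union_le _ _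
      _ ≤ c + c := add_le_add (hfan d hd1 hdD qa hqa) (hfan d hd1 hdD qb hqbmem)
      _ = 2 * c := by ring
  calc ∑ d ∈ Finset.Icc 1 D, _ ≤ ∑ d ∈ Finset.Icc 1 D, 2 * c := Finset.sum_le_sum key
    _ = 2 * c * D := by rw [Finset.sum_const, Nat.card_Icc]; ring_nf; simp [mul_comm]
end
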